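/- Let m, n be positive integers, σ : {1,…,n} → {1,…,m}, let a_1,…,a_n, ħ be nonzero complex numbers and 0 < |q| < 1, and define Φ_f := ∏_{(j,k): σ(j)<σ(k)} Φ(q a_k/a_j)/Φ(ħ^{-1} a_k/a_j). Then for every i ∈ {1,…,n}, the value of Φ_f with a_i replaced by q a_i, divided by Φ_f, equals ∏_{j: σ(j)<σ(i)} (1 − ħ^{-1}a_i/a_j)/(1 − q a_i/a_j) · ∏_{j: σ(j)>σ(i)} (1 − a_j/a_i)/(1 − a_j/(qħ a_i)), whenever all occurring denominators are nonzero. -/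

import Mathlib

/-
The functional equation `Φ(x) = (1 - x) Φ(qx)` drives everything. Replacing `aᵢ` by `q aᵢ`
only touches the factors `Φ(q aₖ/aⱼ)/Φ(ħ⁻¹ aₖ/aⱼ)` of `Φ_f` with `i ∈ {j, k}`: for `j = i` the
argument is divided by `q`, for `k = i` it is multiplied by `q`, and the functional equation
turns each such factor into the old one times an elementary ratio. Collecting these ratios row
by row and column by column gives the two finite products.
-/

/-- `Φ(x) = ∏_{i≥0} (1 - x qⁱ)`. -/
noncomputable def Phi (q x : ℂ) : ℂ := ∏' i : ℕ, (1 - x * q ^ i)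

/-- The explicit infinite product `Φ_f = Φ((q - ħ⁻¹)𝒫|_f)` attached to the fixed point `σ`
of a co-separated bow variety all of whose D5 branes have weight one. -/
noncomputable def PhiCosep {m n : ℕ} (q h : ℂ) (σ : Fin n → Fin m) (a : Fin n → ℂ) : ℂ :=
  ∏ j : Fin n, ∏ k : Fin n,
    if σ j < σ k then Phi q (q * (a k / a j)) / Phi q (h⁻¹ * (a k / a j)) else 1

theorem Finset.prod_prod_eq_mul_of_col_row {ι M : Type*} [Fintype ι] [DecidableEq ι]
    [CommMonoid M] {f g : ι → ι → M} (c r : ι → M) (i : ι)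
    (hfg : ∀ j k, g j k = (if k = i then c j else 1) * (if j = i then r k else 1) * f j k) :
    ∏ j, ∏ k, g j k = (∏ j, c j) * (∏ k, r k) * ∏ j, ∏ k, f j k := by
  simp only [hfg, Finset.prod_mul_distrib, Finset.prod_ite_eq', Finset.mem_univ, if_true]
  rw [Finset.prod_comm (f := fun j k => if j = i then r k else 1)]
  simp only [Finset.prod_ite_eq', Finset.mem_univ, if_true]

theorem multipliable_one_sub_mul_pow {q : ℂ} (x : ℂ) (hq : ‖q‖ < 1) :
    Multipliable fun i : ℕ => 1 - x * q ^ i := by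
  have hs : Summable fun i : ℕ => -(x * q ^ i) :=
    ((summable_geometric_of_norm_lt_one hq).mul_left x).neg
  simpa only [sub_eq_add_neg] using Complex.multipliable_one_add_of_summable hs

theorem Phi_eq_one_sub_mul_Phi {q : ℂ} (x : ℂ) (hq : ‖q‖ < 1) :
    Phi q x = (1 - x) * Phi q (q * x) := by
  have hshift : Multipliable fun i : ℕ => 1 - x * q ^ (i + 1) :=
    (multipliable_one_sub_mul_pow (q * x) hq).congr fun i => by ring
  unfold Phi
  rw [tprod_eq_zero_mul' (f := fun i => 1 - x * q ^ i) hshift, pow_zero, mul_one]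
  congr 1
  exact tprod_congr fun i => by ring

theorem one_sub_ne_zero_of_Phi_ne_zero {q x : ℂ} (hq : ‖q‖ < 1) (hx : Phi q x ≠ 0) : 1 - x ≠ 0 :=
  left_ne_zero_of_mul (Phi_eq_one_sub_mul_Phi x hq ▸ hx)

noncomputable def phiRatio (q h x : ℂ) : ℂ := Phi q (q * x) / Phi q (h⁻¹ * x)

theorem phiRatio_eq_mul_phiRatio_mul {q : ℂ} (h x : ℂ) (hq : ‖q‖ < 1) :
    phiRatio q h x = (1 - q * x) / (1 - h⁻¹ * x) * phiRatio q h (q * x) := by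
  rw [phiRatio, phiRatio, Phi_eq_one_sub_mul_Phi (q * x) hq, Phi_eq_one_sub_mul_Phi (h⁻¹ * x) hq,
    div_mul_div_comm, mul_left_comm q h⁻¹]

theorem phiRatio_mul {q h x : ℂ} (hq : ‖q‖ < 1) (hqx : 1 - q * x ≠ 0) (hhx : 1 - h⁻¹ * x ≠ 0) :
    phiRatio q h (q * x) = (1 - h⁻¹ * x) / (1 - q * x) * phiRatio q h x := by
  rw [phiRatio_eq_mul_phiRatio_mul h x hq, ← mul_assoc, div_mul_div_comm, mul_comm (1 - h⁻¹ * x),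
    div_self (mul_ne_zero hqx hhx), one_mul]

theorem phiRatio_div {q : ℂ} (h x : ℂ) (hq : ‖q‖ < 1) (hq0 : q ≠ 0) :
    phiRatio q h (x / q) = (1 - x) / (1 - x / (q * h)) * phiRatio q h x := by
  rw [phiRatio_eq_mul_phiRatio_mul h (x / q) hq, mul_div_cancel₀ x hq0]
  congr 3
  ring

theorem PhiCosep_eq_prod_phiRatio {m n : ℕ} (q h : ℂ) (σ : Fin n → Fin m) (a : Fin n → ℂ) :
    PhiCosep q h σ a = ∏ j, ∏ k, if σ j < σ k then phiRatio q h (a k / a j) else 1 :=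
  rfl

theorem PhiCosep_update_mul {m n : ℕ} {q : ℂ} (h : ℂ) (σ : Fin n → Fin m) (a : Fin n → ℂ)
    (i : Fin n) (hq : ‖q‖ < 1) (hq0 : q ≠ 0)
    (hden1 : ∀ j, σ j < σ i → Phi q (h⁻¹ * (a i / a j)) ≠ 0)
    (hden2 : ∀ j, σ j < σ i → 1 - q * (a i / a j) ≠ 0) :
    PhiCosep q h σ (Function.update a i (q * a i)) =
      (∏ j, if σ j < σ i then (1 - h⁻¹ * (a i / a j)) / (1 - q * (a i / a j)) else 1) *
        (∏ k, if σ i < σ k then (1 - a k / a i) / (1 - a k / (q * h * a i)) else 1) *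
          PhiCosep q h σ a := by
  rw [PhiCosep_eq_prod_phiRatio, PhiCosep_eq_prod_phiRatio]
  refine Finset.prod_prod_eq_mul_of_col_row _ _ i fun j k => ?_
  rcases eq_or_ne i j with rfl | hj
  · rcases eq_or_ne i k with rfl | hk
    · simp
    · simp only [Function.update_self, Function.update_of_ne hk.symm, if_true, if_neg hk.symm,
        one_mul]
      split_ifs
      · rw [show a k / (q * a i) = a k / a i / q by ring, phiRatio_div h _ hq hq0,
          show a k / (q * h * a i) = a k / a i / (q * h) by ring]
      · rw [one_mul]
  · rcases eq_or_ne i k with rfl | hk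
    · simp only [Function.update_self, Function.update_of_ne hj.symm, if_true, if_neg hj.symm,
        mul_one]
      split_ifs with hσ
      · rw [mul_div_assoc, phiRatio_mul hq (hden2 j hσ)
          (one_sub_ne_zero_of_Phi_ne_zero hq (hden1 j hσ))]
      · rw [one_mul]
    · simp [hj.symm, hk.symm]

theorem PhiCosep_qshift_general {m n : ℕ} (σ : Fin n → Fin m)
    (q h : ℂ) (a : Fin n → ℂ) (i : Fin n)
    (hq0 : q ≠ 0) (hq2 : ‖q‖ < 1)
    (hPhi : PhiCosep q h σ a ≠ 0)
    (hden1 : ∀ A ∈ ({a, Function.update a i (q * a i)} : Set (Fin n → ℂ)),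
      ∀ j k : Fin n, σ j < σ k → Phi q (h⁻¹ * (A k / A j)) ≠ 0)
    (hden2 : ∀ j, σ j < σ i → 1 - q * (a i / a j) ≠ 0) :
    PhiCosep q h σ (Function.update a i (q * a i)) / PhiCosep q h σ a =
      (∏ j : Fin n, if σ j < σ i then (1 - h⁻¹ * (a i / a j)) / (1 - q * (a i / a j)) else 1) *
        ∏ j : Fin n, if σ i < σ j then (1 - a j / a i) / (1 - a j / (q * h * a i)) else 1 := by
  rw [PhiCosep_update_mul h σ a i hq2 hq0 (fun j => hden1 a (Set.mem_insert _ _) j i) hden2,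
    mul_div_cancel_right₀ _ hPhi]

/-- The q-shift transformation `T_{a_i}(Φ_f)/Φ_f` in the co-separated case. -/
theorem PhiCosep_qshift {m n : ℕ} (hm : 0 < m) (hn : 0 < n) (σ : Fin n → Fin m)
    (q h : ℂ) (a : Fin n → ℂ) (i : Fin n)
    (hq0 : q ≠ 0) (hh0 : h ≠ 0) (ha : ∀ j, a j ≠ 0)
    (hq1 : 0 < ‖q‖) (hq2 : ‖q‖ < 1)
    (hPhi : PhiCosep q h σ a ≠ 0)
    (hden1 : ∀ A ∈ ({a, Function.update a i (q * a i)} : Set (Fin n → ℂ)),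
      ∀ j k : Fin n, σ j < σ k → Phi q (h⁻¹ * (A k / A j)) ≠ 0)
    (hden2 : ∀ j, σ j < σ i → 1 - q * (a i / a j) ≠ 0)
    (hden3 : ∀ j, σ i < σ j → 1 - a j / (q * h * a i) ≠ 0) :
    PhiCosep q h σ (Function.update a i (q * a i)) / PhiCosep q h σ a =
      (∏ j : Fin n, if σ j < σ i then (1 - h⁻¹ * (a i / a j)) / (1 - q * (a i / a j)) else 1) *
        ∏ j : Fin n, if σ i < σ j then (1 - a j / a i) / (1 - a j / (q * h * a i)) else 1 :=
  PhiCosep_qshift_general σ q h a i hq0 hq2 hPhi hden1 hden2
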